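/- (Simulation of H up to a Pauli operator by state transfer with observables Z, Z⊗X, X) Let |x_s⟩ = (|0⟩ + (-1)^s·|1⟩)/√2, the unit eigenvectors of σx with eigenvalue (-1)^s. Work in ℂ²⊗ℂ² with the data qubit a as the first factor and the ancilla qubit b as the second, the ancilla prepared in |s₁⟩ by a Z-measurement with outcome s₁. For all s₁, s₂, s₃ ∈ {0,1} and every φ ∈ ℂ²: (|x_{s₃}⟩⟨x_{s₃}| ⊗ I) · ((I⊗I + (-1)^{s₂}·σz⊗σx)/2) · (φ ⊗ |s₁⟩) = (1/2) · |x_{s₃}⟩ ⊗ (σx^{s₁}·σz^{s₂}·σx^{s₃}·H·φ). Hence the measurement sequence Z_b, Z_a⊗X_b, X_a transfers the state Hφ to qubit b up to the Pauli operator σx^{s₁}σz^{s₂}σx^{s₃}, each outcome branch having squared norm ‖φ‖²/4. -/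

import Mathlib

/-!
Measuring `Z_a ⊗ X_b` turns `φ ⊗ |s₁⟩` into `(φ ⊗ |s₁⟩ + (-1)^{s₂} σzφ ⊗ σx|s₁⟩)/2`, and the
rank-one projector `|x_{s₃}⟩⟨x_{s₃}|` on qubit `a` then leaves
`|x_{s₃}⟩ ⊗ (⟨x_{s₃}|φ⟩ |s₁⟩ + (-1)^{s₂} ⟨x_{s₃}|σzφ⟩ σx|s₁⟩)/2`.
The rows of `σx^{s₃} H` are `⟨x_{s₃}|` and `⟨x_{s₃}|σz`, so the second factor is
`σx^{s₁} σz^{s₂} σx^{s₃} H φ`. Its norm is that of `φ` because `σx`, `σz` and `H` are unitary,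
and `|x_{s₃}⟩` is a unit vector.
-/

open Matrix Complex
open scoped Real Kronecker

noncomputable section

/-- The Pauli matrix σx. -/
def σx : Matrix (Fin 2) (Fin 2) ℂ := !![0, 1; 1, 0]

/-- The Pauli matrix σz. -/
def σz : Matrix (Fin 2) (Fin 2) ℂ := !![1, 0; 0, -1]

/-- The Hadamard gate `H = (1/√2)·!![1,1;1,-1]`. -/
def Hgate : Matrix (Fin 2) (Fin 2) ℂ :=
  ((Real.sqrt 2 : ℂ))⁻¹ • !![1, 1; 1, -1]

/-- The computational basis vector `|s⟩` of ℂ². -/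
def ket (s : Fin 2) : Fin 2 → ℂ := fun i => if i = s then 1 else 0

/-- The eigenvector `|x_s⟩ = (|0⟩ + (-1)^s·|1⟩)/√2` of `σx` with eigenvalue `(-1)^s`. -/
def ketx (s : Fin 2) : Fin 2 → ℂ := fun i =>
  if i = 0 then ((Real.sqrt 2 : ℂ))⁻¹
  else ((-1 : ℂ) ^ (s : ℕ)) * ((Real.sqrt 2 : ℂ))⁻¹

/-- The rank-one projector `|x_s⟩⟨x_s|`. -/
def projx (s : Fin 2) : Matrix (Fin 2) (Fin 2) ℂ :=
  Matrix.of fun i j => ketx s i * (starRingEnd ℂ) (ketx s j)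

/-- The tensor product of two vectors of ℂ². -/
def tp (φ ψ : Fin 2 → ℂ) : Fin 2 × Fin 2 → ℂ := fun p => φ p.1 * ψ p.2

section

variable {𝕜 n : Type*} [RCLike 𝕜] [Fintype n]

lemma sum_norm_sq_eq_star_dotProduct (v : n → 𝕜) :
    ((∑ i, ‖v i‖ ^ 2 : ℝ) : 𝕜) = star v ⬝ᵥ v := by
  simp [dotProduct, RCLike.conj_mul]

lemma sum_norm_sq_mulVec_of_mem_unitaryGroup [DecidableEq n] {U : Matrix n n 𝕜}
    (hU : U ∈ unitaryGroup n 𝕜) (v : n → 𝕜) :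
    ∑ i, ‖(U *ᵥ v) i‖ ^ 2 = ∑ i, ‖v i‖ ^ 2 := by
  apply RCLike.ofReal_injective (K := 𝕜)
  rw [sum_norm_sq_eq_star_dotProduct, sum_norm_sq_eq_star_dotProduct, star_mulVec,
    ← dotProduct_mulVec, mulVec_mulVec, ← star_eq_conjTranspose, mem_unitaryGroup_iff'.mp hU,
    one_mulVec]

end

lemma mem_unitaryGroup_of_star_eq_of_mul_self {n α : Type*} [Fintype n] [DecidableEq n]
    [CommRing α] [StarRing α] {U : Matrix n n α} (hstar : star U = U) (hsq : U * U = 1) :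
    U ∈ unitaryGroup n α :=
  mem_unitaryGroup_iff'.mpr (by rw [hstar, hsq])

lemma σx_mem_unitaryGroup : σx ∈ unitaryGroup (Fin 2) ℂ := by
  refine mem_unitaryGroup_of_star_eq_of_mul_self ?_ ?_ <;>
    ext i j <;> fin_cases i <;> fin_cases j <;> simp [σx]

lemma σz_mem_unitaryGroup : σz ∈ unitaryGroup (Fin 2) ℂ := by
  refine mem_unitaryGroup_of_star_eq_of_mul_self ?_ ?_ <;>
    ext i j <;> fin_cases i <;> fin_cases j <;> simp [σz]

lemma Hgate_mem_unitaryGroup : Hgate ∈ unitaryGroup (Fin 2) ℂ := by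
  have h2 : (Real.sqrt 2 : ℂ) * (Real.sqrt 2 : ℂ) = 2 := by
    rw [← Complex.ofReal_mul, Real.mul_self_sqrt zero_le_two]; norm_num
  refine mem_unitaryGroup_of_star_eq_of_mul_self ?_ ?_ <;>
    ext i j <;> fin_cases i <;> fin_cases j <;> simp [Hgate, Matrix.mul_apply, Fin.sum_univ_two]
  all_goals rw [← mul_inv, h2]; norm_num

lemma kronecker_mulVec_tp (A B : Matrix (Fin 2) (Fin 2) ℂ) (u v : Fin 2 → ℂ) :
    (A ⊗ₖ B) *ᵥ tp u v = tp (A *ᵥ u) (B *ᵥ v) := by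
  ext p
  simp only [mulVec, dotProduct, tp, kroneckerMap_apply, Fintype.sum_prod_type,
    Finset.sum_mul_sum]
  exact Finset.sum_congr rfl fun i _ => Finset.sum_congr rfl fun j _ => by ring

lemma tp_smul_left (c : ℂ) (u v : Fin 2 → ℂ) : tp (c • u) v = c • tp u v := by
  ext p; simp [tp, mul_assoc]

lemma tp_smul_right (c : ℂ) (u v : Fin 2 → ℂ) : tp u (c • v) = c • tp u v := by
  ext p; simp [tp, mul_left_comm]

lemma tp_add_right (u v w : Fin 2 → ℂ) : tp u (v + w) = tp u v + tp u w := by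
  ext p; simp [tp, mul_add]

lemma projx_eq_vecMulVec (s : Fin 2) : projx s = vecMulVec (ketx s) (star (ketx s)) := rfl

lemma projx_mulVec (s : Fin 2) (u : Fin 2 → ℂ) :
    projx s *ᵥ u = (star (ketx s) ⬝ᵥ u) • ketx s := by
  rw [projx_eq_vecMulVec, vecMulVec_mulVec, op_smul_eq_smul]

lemma sum_norm_sq_ketx (s : Fin 2) : ∑ i, ‖ketx s i‖ ^ 2 = 1 := by
  have h2 : Real.sqrt 2 ^ 2 = 2 := Real.sq_sqrt zero_le_two
  simp [ketx, Fin.sum_univ_two, inv_pow, h2]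
  norm_num

lemma sum_norm_sq_tp (u v : Fin 2 → ℂ) :
    ∑ p, ‖tp u v p‖ ^ 2 = (∑ i, ‖u i‖ ^ 2) * ∑ j, ‖v j‖ ^ 2 := by
  simp only [tp, norm_mul, mul_pow, Fintype.sum_prod_type, Finset.sum_mul_sum]

-- `(σx^s H) φ = (⟨x_s|φ⟩, ⟨x_{s+1}|φ⟩)` and `⟨x_{s+1}| = ⟨x_s|σz`.
lemma pow_σx_mul_Hgate_mulVec (s : Fin 2) (φ : Fin 2 → ℂ) :
    (σx ^ (s : ℕ) * Hgate) *ᵥ φ =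
      (star (ketx s) ⬝ᵥ φ) • ket 0 + (star (ketx s) ⬝ᵥ σz *ᵥ φ) • ket 1 := by
  fin_cases s <;> ext i <;> fin_cases i <;>
    simp [σx, σz, Hgate, ketx, ket, mulVec, dotProduct, Fin.sum_univ_two, map_inv₀]

lemma pow_σx_mulVec_ket (s t : Fin 2) : σx ^ (s : ℕ) *ᵥ ket t = ket (s + t) := by
  fin_cases s <;> fin_cases t <;> ext i <;> fin_cases i <;> simp [σx, ket, mulVec, dotProduct]

lemma σx_mulVec_ket (t : Fin 2) : σx *ᵥ ket t = ket (t + 1) := by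
  fin_cases t <;> ext i <;> fin_cases i <;> simp [σx, ket, mulVec, dotProduct]

lemma pow_σz_mulVec_ket (s t : Fin 2) :
    σz ^ (s : ℕ) *ᵥ ket t = (-1 : ℂ) ^ (s * t : ℕ) • ket t := by
  fin_cases s <;> fin_cases t <;> ext i <;> fin_cases i <;> simp [σz, ket, mulVec, dotProduct]

lemma pauli_frame_mul_Hgate_mulVec (s₁ s₂ s₃ : Fin 2) (φ : Fin 2 → ℂ) :
    (σx ^ (s₁ : ℕ) * σz ^ (s₂ : ℕ) * σx ^ (s₃ : ℕ) * Hgate) *ᵥ φ =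
      (star (ketx s₃) ⬝ᵥ φ) • ket s₁
        + ((-1) ^ (s₂ : ℕ) * (star (ketx s₃) ⬝ᵥ σz *ᵥ φ)) • σx *ᵥ ket s₁ := by
  rw [mul_assoc, mul_assoc, ← mulVec_mulVec, ← mulVec_mulVec, pow_σx_mul_Hgate_mulVec]
  simp only [mulVec_add, mulVec_smul, pow_σz_mulVec_ket, pow_σx_mulVec_ket, σx_mulVec_ket,
    smul_smul, Fin.val_zero, Fin.val_one, mul_zero, mul_one, pow_zero, one_smul, add_zero]
  rw [mul_comm]

lemma projx_kronecker_one_mulVec_parityProjector_mulVec_tp (s : Fin 2) (c : ℂ)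
    (A B : Matrix (Fin 2) (Fin 2) ℂ) (u v : Fin 2 → ℂ) :
    (projx s ⊗ₖ (1 : Matrix (Fin 2) (Fin 2) ℂ)) *ᵥ
        ((2⁻¹ : ℂ) • ((1 : Matrix (Fin 2 × Fin 2) (Fin 2 × Fin 2) ℂ) + c • (A ⊗ₖ B))) *ᵥ tp u v =
      (2⁻¹ : ℂ) • tp (ketx s)
        ((star (ketx s) ⬝ᵥ u) • v + (c * (star (ketx s) ⬝ᵥ A *ᵥ u)) • B *ᵥ v) := by
  rw [smul_mulVec, add_mulVec, one_mulVec, smul_mulVec, kronecker_mulVec_tp,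
    mulVec_smul, mulVec_add, mulVec_smul, kronecker_mulVec_tp, kronecker_mulVec_tp, one_mulVec,
    one_mulVec, projx_mulVec, projx_mulVec, tp_smul_left, tp_smul_left, tp_add_right,
    tp_smul_right, tp_smul_right, smul_smul, mul_comm c]

/-- Simulation of `H` up to a Pauli operator by state transfer with observables
`Z`, `Z⊗X`, `X`: applying the projectors for outcomes `s₂` (observable `σz⊗σx`)
and `s₃` (observable `σx` on the data qubit `a`) to `φ ⊗ |s₁⟩` yields
`(1/2)·|x_{s₃}⟩ ⊗ (σx^{s₁}·σz^{s₂}·σx^{s₃}·H·φ)`; every branch has squared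
norm `‖φ‖²/4`. -/
theorem H_state_transfer (s₁ s₂ s₃ : Fin 2) (φ : Fin 2 → ℂ) :
    ((projx s₃ ⊗ₖ (1 : Matrix (Fin 2) (Fin 2) ℂ)).mulVec
      (((2 : ℂ)⁻¹ • ((1 : Matrix (Fin 2 × Fin 2) (Fin 2 × Fin 2) ℂ)
          + ((-1 : ℂ) ^ (s₂ : ℕ)) • (σz ⊗ₖ σx))).mulVec
        (tp φ (ket s₁)))
      = (2 : ℂ)⁻¹ •
          tp (ketx s₃)
            ((σx ^ (s₁ : ℕ) * σz ^ (s₂ : ℕ) * σx ^ (s₃ : ℕ) * Hgate).mulVec φ)) ∧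
    (∑ p : Fin 2 × Fin 2,
        ‖((2 : ℂ)⁻¹ •
          tp (ketx s₃)
            ((σx ^ (s₁ : ℕ) * σz ^ (s₂ : ℕ) * σx ^ (s₃ : ℕ) * Hgate).mulVec φ)) p‖ ^ 2
      = (∑ i : Fin 2, ‖φ i‖ ^ 2) / 4) := by
  refine ⟨by rw [projx_kronecker_one_mulVec_parityProjector_mulVec_tp,
    pauli_frame_mul_Hgate_mulVec], ?_⟩
  have hU : σx ^ (s₁ : ℕ) * σz ^ (s₂ : ℕ) * σx ^ (s₃ : ℕ) * Hgate ∈ unitaryGroup (Fin 2) ℂ :=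
    mul_mem (mul_mem (mul_mem (pow_mem σx_mem_unitaryGroup _) (pow_mem σz_mem_unitaryGroup _))
      (pow_mem σx_mem_unitaryGroup _)) Hgate_mem_unitaryGroup
  simp only [Pi.smul_apply, smul_eq_mul, norm_mul, mul_pow, ← Finset.mul_sum, sum_norm_sq_tp,
    sum_norm_sq_ketx, one_mul, sum_norm_sq_mulVec_of_mem_unitaryGroup hU]
  norm_num
  ring
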